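/- arXiv:1708.09061 — 3 statements merged into one kernel-verified Lean document; each statement's English description precedes it below -/
import Mathlib

section
/- Let γ < κ be infinite cardinals and let λ < κ be a cardinal. For any family {𝒮_i : i < λ} of sets each belonging to Δ([κ]^{<γ}, [κ]^{<γ}), there is a single set H ∈ [κ]^κ that is simultaneously homogeneous for every 𝒮_i, i.e., for each i < λ, either [H]^κ ⊆ 𝒮_i or [H]^κ ∩ 𝒮_i = ∅. -/
open Set Cardinal

universe u

/-- `[κ]^κ`: the subsets of `κ` (viewed as the set of ordinals `< κ`) of cardinality `κ`
(equivalently, of order type `κ`). -/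
def bigSets (κ : Cardinal.{0}) : Set (Set Ordinal.{0}) :=
  {X | X ⊆ Set.Iio κ.ord ∧ #X = Cardinal.lift.{1} κ}

/-- `[H]^κ`: the subsets of `H` of cardinality `κ`. -/
def subBig (κ : Cardinal.{0}) (H : Set Ordinal.{0}) : Set (Set Ordinal.{0}) :=
  {X | X ⊆ H ∧ #X = Cardinal.lift.{1} κ}

/-- `X` matches the pattern `(A,B)`: `A ⊆ X` and `B ∩ X = ∅`. -/
def Matches (X A B : Set Ordinal.{0}) : Prop :=
  A ⊆ X ∧ B ∩ X = ∅

/-- `[A;B]`: the members of `[κ]^κ` matching the pattern `(A,B)`. -/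
def patternSet (κ : Cardinal.{0}) (A B : Set Ordinal.{0}) : Set (Set Ordinal.{0}) :=
  {X ∈ bigSets κ | Matches X A B}

/-- `Σ(𝒜,ℬ)`: the subsets of `[κ]^κ` which are unions of sets `[A;B]` with
`A ∈ 𝒜`, `B ∈ ℬ`, `A ∩ B = ∅`. -/
def SigmaFam (κ : Cardinal.{0}) (𝒜 ℬ : Set (Set Ordinal.{0})) : Set (Set (Set Ordinal.{0})) :=
  {S | ∃ Q : Set (Set Ordinal.{0} × Set Ordinal.{0}),
    (∀ p ∈ Q, p.1 ∈ 𝒜 ∧ p.2 ∈ ℬ ∧ Disjoint p.1 p.2) ∧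
    S = {X ∈ bigSets κ | ∃ p ∈ Q, Matches X p.1 p.2}}

/-- `Δ(𝒜,ℬ)`: those `S` with both `S` and `[κ]^κ \ S` in `Σ(𝒜,ℬ)`. -/
def DeltaFam (κ : Cardinal.{0}) (𝒜 ℬ : Set (Set Ordinal.{0})) : Set (Set (Set Ordinal.{0})) :=
  {S | S ∈ SigmaFam κ 𝒜 ℬ ∧ bigSets κ \ S ∈ SigmaFam κ 𝒜 ℬ}

/-- `[κ]^{<γ}`: subsets of `κ` of cardinality `< γ`. -/
def smallSets (κ γ : Cardinal.{0}) : Set (Set Ordinal.{0}) :=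
  {A | A ⊆ Set.Iio κ.ord ∧ #A < Cardinal.lift.{1} γ}

/-- `[κ]^n`: `n`-element subsets of `κ`. -/
def nSets (κ : Cardinal.{0}) (n : ℕ) : Set (Set Ordinal.{0}) :=
  {A | A ⊆ Set.Iio κ.ord ∧ #A = n}

/-- `[κ]^{<ω}`: finite subsets of `κ`. -/
def finSets (κ : Cardinal.{0}) : Set (Set Ordinal.{0}) :=
  {A | A ⊆ Set.Iio κ.ord ∧ A.Finite}

/-- `[κ]^ω`: subsets of `κ` of order type `ω`. -/
def omegaSets (κ : Cardinal.{0}) : Set (Set Ordinal.{0}) :=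
  {A | A ⊆ Set.Iio κ.ord ∧ A.Infinite ∧ ∀ a ∈ A, (A ∩ Set.Iio a).Finite}

/-- `S ⊆ [κ]^κ` is Ramsey: some `H ∈ [κ]^κ` is homogeneous for `S`. -/
def IsRamsey (κ : Cardinal.{0}) (S : Set (Set Ordinal.{0})) : Prop :=
  ∃ H ∈ bigSets κ, subBig κ H ⊆ S ∨ subBig κ H ∩ S = ∅

open Function

/-!
Every `S ∈ Δ([κ]^{<γ}, [κ]^{<γ})` is decided by a set `D` of size at most `γ`: the members of
`[κ]^κ` disjoint from `D` lie all in `S` or all outside it. Otherwise patterns `(A', B')` of the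
complement can be chosen, `γ` of them, with pairwise disjoint `A'`; let `D` be the union of their
`B'`. Some `Y ∈ S` avoids `D`, so some pattern `(A, B)` of `S` has `A` disjoint from every `B'`,
and as `|B| < γ`, `B` misses one of the `A'`. Then `κ \ (B ∪ B')` matches both `(A, B)` and
`(A', B')`, so it lies in `S` and outside `S`.
The union of the `λ` sets `D` has size `< κ`, and its complement is homogeneous for every `S_i`.
-/

theorem Cardinal.mk_iUnion_le_mul {α ι : Type u} {f : ι → Set α} {a : Cardinal.{u}}
    (h : ∀ i, #(f i) ≤ a) : #(⋃ i, f i) ≤ #ι * a :=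
  (mk_iUnion_le f).trans (mul_le_mul_right (ciSup_le' h) _)

theorem Cardinal.exists_disjoint_of_mk_lt {α ι : Type u} {A : ι → Set α}
    (hA : Pairwise (Disjoint on A)) {B : Set α} (hB : #B < #ι) : ∃ i, Disjoint B (A i) := by
  by_contra! h
  simp only [not_disjoint_iff] at h
  choose x hxB hxA using h
  have hinj : Injective fun i => (⟨x i, hxB i⟩ : B) := by
    intro i j hij
    by_contra hne
    have hxij : x i = x j := congrArg Subtype.val hij
    exact disjoint_left.mp (hA hne) (hxA i) (hxij ▸ hxA j)
  exact (mk_le_of_injective hinj).not_gt hB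

theorem Cardinal.exists_seq_pairwise_disjoint {α : Type u} {ι : Type*} {c : Cardinal.{u}}
    (hc : ℵ₀ ≤ c) {s : Set ι} {A : ι → Set α} (hA : ∀ x ∈ s, #(A x) ≤ c)
    (havoid : ∀ B : Set α, #B ≤ c → ∃ x ∈ s, Disjoint (A x) B) :
    ∃ f : c.ord.ToType → ι, (∀ i, f i ∈ s) ∧ Pairwise (Disjoint on (A ∘ f)) := by
  classical
  let g : Set α → ι := fun B =>
    if h : #B ≤ c then (havoid B h).choose else (havoid ∅ (by simp)).choose
  have hg_mem : ∀ B : Set α, g B ∈ s := fun B => by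
    by_cases h : #B ≤ c
    · simpa [g, h] using (havoid B h).choose_spec.1
    · simpa [g, h] using (havoid ∅ (by simp)).choose_spec.1
  have hg_disj : ∀ B : Set α, #B ≤ c → Disjoint (A (g B)) B := fun B h => by
    simpa [g, h] using (havoid B h).choose_spec.2
  let f : c.ord.ToType → ι := WellFoundedLT.fix fun i rec => g (⋃ j : Iio i, A (rec j j.2))
  have hf : ∀ i, f i = g (⋃ j : Iio i, A (f j)) := WellFoundedLT.fix_eq _
  refine ⟨f, fun i => hf i ▸ hg_mem _, (pairwise_disjoint_on _).2 fun j i hji => ?_⟩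
  have hsmall : #(⋃ k : Iio i, A (f k)) ≤ c := calc
    _ ≤ #(Iio i) * c := mk_iUnion_le_mul fun k => hA _ (hf k ▸ hg_mem _)
    _ ≤ c * c := mul_le_mul_left (by simpa using (mk_Iio_lt i (by simp)).le) _
    _ = c := mul_eq_self hc
  have := hg_disj _ hsmall
  rw [← hf] at this
  exact (this.mono_right (subset_iUnion_of_subset ⟨j, hji⟩ subset_rfl)).symm

theorem mk_Iio_ord (c : Cardinal.{0}) : #(Iio c.ord) = lift.{1} c := by
  simp

theorem diff_mem_bigSets {κ : Cardinal.{0}} (hκ : ℵ₀ ≤ κ) {B : Set Ordinal.{0}}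
    (hB : #B < lift.{1} κ) : Iio κ.ord \ B ∈ bigSets κ := by
  refine ⟨sdiff_subset, le_antisymm ((mk_le_mk_of_subset sdiff_subset).trans_eq (mk_Iio_ord κ)) ?_⟩
  by_contra! hlt
  have : lift.{1} κ < lift.{1} κ := calc
    lift.{1} κ = #(Iio κ.ord) := (mk_Iio_ord κ).symm
    _ ≤ #(Iio κ.ord \ B ∪ B : Set Ordinal) := mk_le_mk_of_subset (subset_sdiff_union _ _)
    _ ≤ #(Iio κ.ord \ B : Set Ordinal) + #B := mk_union_le _ _
    _ < lift.{1} κ := add_lt_of_lt (aleph0_le_lift.2 hκ) hlt hB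
  exact this.false

theorem exists_mem_bigSets_matches_matches {κ : Cardinal.{0}} (hκ : ℵ₀ ≤ κ)
    {A B A' B' : Set Ordinal.{0}} (hA : A ⊆ Iio κ.ord) (hA' : A' ⊆ Iio κ.ord)
    (hB : #B < lift.{1} κ) (hB' : #B' < lift.{1} κ)
    (hAB : Disjoint A (B ∪ B')) (hA'B : Disjoint A' (B ∪ B')) :
    ∃ Z ∈ bigSets κ, Matches Z A B ∧ Matches Z A' B' := by
  refine ⟨Iio κ.ord \ (B ∪ B'), diff_mem_bigSets hκ ?_, ⟨subset_sdiff.2 ⟨hA, hAB⟩, ?_⟩,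
    ⟨subset_sdiff.2 ⟨hA', hA'B⟩, ?_⟩⟩
  · exact (mk_union_le B B').trans_lt (add_lt_of_lt (aleph0_le_lift.2 hκ) hB hB')
  · exact (disjoint_sdiff_right.mono_left subset_union_left).eq_bot
  · exact (disjoint_sdiff_right.mono_left subset_union_right).eq_bot

def Decides (κ : Cardinal.{0}) (D : Set Ordinal.{0}) (S : Set (Set Ordinal.{0})) : Prop :=
  (∀ Y ∈ bigSets κ, Disjoint Y D → Y ∈ S) ∨ (∀ Y ∈ bigSets κ, Disjoint Y D → Y ∉ S)

theorem Decides.mono {κ : Cardinal.{0}} {D U : Set Ordinal.{0}} {S : Set (Set Ordinal.{0})}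
    (h : Decides κ D S) (hDU : D ⊆ U) : Decides κ U S :=
  h.imp (fun h Y hY hYU => h Y hY (hYU.mono_right hDU))
    (fun h Y hY hYU => h Y hY (hYU.mono_right hDU))

theorem Decides.homogeneous {κ : Cardinal.{0}} {D : Set Ordinal.{0}} {S : Set (Set Ordinal.{0})}
    (h : Decides κ D S) : subBig κ (Iio κ.ord \ D) ⊆ S ∨ subBig κ (Iio κ.ord \ D) ∩ S = ∅ := by
  have hbig : ∀ Y ∈ subBig κ (Iio κ.ord \ D), Y ∈ bigSets κ ∧ Disjoint Y D :=
    fun Y hY => ⟨⟨hY.1.trans sdiff_subset, hY.2⟩, disjoint_sdiff_left.mono_left hY.1⟩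
  refine h.imp (fun h Y hY => h Y (hbig Y hY).1 (hbig Y hY).2) fun h => ?_
  exact eq_empty_iff_forall_notMem.2 fun Y hY => h Y (hbig Y hY.1).1 (hbig Y hY.1).2 hY.2

theorem exists_decides_of_mem_deltaFam {γ κ : Cardinal.{0}} (hγ : ℵ₀ ≤ γ) (hγκ : γ < κ)
    {S : Set (Set Ordinal.{0})} (hS : S ∈ DeltaFam κ (smallSets κ γ) (smallSets κ γ)) :
    ∃ D : Set Ordinal.{0}, #D ≤ lift.{1} γ ∧ Decides κ D S := by
  obtain ⟨⟨Q, hQ, hSQ⟩, ⟨Q', hQ', hQ'S⟩⟩ := hS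
  have hc : ℵ₀ ≤ lift.{1} γ := aleph0_le_lift.2 hγ
  by_contra! hD
  simp only [Decides, not_or, not_forall, not_not, exists_prop] at hD
  have havoid : ∀ B : Set Ordinal.{0}, #B ≤ lift.{1} γ → ∃ q ∈ Q', Disjoint q.1 B := by
    intro B hB
    obtain ⟨Y, hY, hYB, hYS⟩ := (hD B hB).1
    have hY' : Y ∈ bigSets κ \ S := ⟨hY, hYS⟩
    rw [hQ'S] at hY'
    obtain ⟨-, q, hq, hqY, -⟩ := hY'
    exact ⟨q, hq, hYB.mono_left hqY⟩
  obtain ⟨f, hfQ', hfdisj⟩ :=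
    exists_seq_pairwise_disjoint hc (fun q hq => (hQ' q hq).1.2.le) havoid
  set D := ⋃ i, (f i).2
  have hD_small : #D ≤ lift.{1} γ := calc
    #D ≤ #(lift.{1} γ).ord.ToType * lift.{1} γ :=
        mk_iUnion_le_mul fun i => (hQ' _ (hfQ' i)).2.1.2.le
    _ = lift.{1} γ := by rw [mk_toType, card_ord, mul_eq_self hc]
  obtain ⟨Y, hY, hYD, hYS⟩ := (hD D hD_small).2
  rw [hSQ] at hYS
  obtain ⟨-, p, hp, hpY, -⟩ := hYS
  obtain ⟨i, hi⟩ : ∃ i, Disjoint p.2 (f i).1 :=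
    exists_disjoint_of_mk_lt hfdisj (by simpa using (hQ p hp).2.1.2)
  have hp_small := (hQ p hp).2.1.2.trans (lift_lt.2 hγκ)
  have hq_small := (hQ' _ (hfQ' i)).2.1.2.trans (lift_lt.2 hγκ)
  obtain ⟨Z, hZ, hZp, hZq⟩ := exists_mem_bigSets_matches_matches (hγ.trans hγκ.le)
    (hQ p hp).1.1 (hQ' _ (hfQ' i)).1.1 hp_small hq_small
    (disjoint_union_right.2 ⟨(hQ p hp).2.2, hYD.mono hpY (subset_iUnion (fun j => (f j).2) i)⟩)
    (disjoint_union_right.2 ⟨hi.symm, (hQ' _ (hfQ' i)).2.2⟩)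
  have hZS : Z ∈ S := hSQ ▸ ⟨hZ, p, hp, hZp⟩
  have hZS' : Z ∈ bigSets κ \ S := hQ'S ▸ ⟨hZ, f i, hfQ' i, hZq⟩
  exact hZS'.2 hZS

/-- Let `γ < κ` be infinite cardinals and `λ < κ` a cardinal.
Any family of `λ` many sets in `Δ([κ]^{<γ}, [κ]^{<γ})` admits a single
`H ∈ [κ]^κ` simultaneously homogeneous for all of them. -/
theorem statement2 (γ κ lam : Cardinal.{0}) (hγ : ℵ₀ ≤ γ) (hγκ : γ < κ)
    (hlam : lam < κ)
    (S : Ordinal.{0} → Set (Set Ordinal.{0}))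
    (hS : ∀ i < lam.ord, S i ∈ DeltaFam κ (smallSets κ γ) (smallSets κ γ)) :
    ∃ H ∈ bigSets κ, ∀ i < lam.ord,
      subBig κ H ⊆ S i ∨ subBig κ H ∩ S i = ∅ := by
  have hκ : ℵ₀ ≤ κ := hγ.trans hγκ.le
  choose D hD_small hD using fun i : Iio lam.ord =>
    exists_decides_of_mem_deltaFam hγ hγκ (hS i i.2)
  have hU : #(⋃ i, D i) < lift.{1} κ := calc
    #(⋃ i, D i) ≤ #(Iio lam.ord) * lift.{1} γ := mk_iUnion_le_mul hD_small
    _ = lift.{1} (lam * γ) := by rw [mk_Iio_ord, lift_mul]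
    _ < lift.{1} κ := lift_lt.2 (mul_lt_of_lt hκ hlam hγκ)
  exact ⟨_, diff_mem_bigSets hκ hU, fun i hi =>
    ((hD ⟨i, hi⟩).mono (subset_iUnion D ⟨i, hi⟩)).homogeneous⟩
end

section
/- Let κ be a Ramsey cardinal, i.e., an uncountable cardinal such that for every coloring c : [κ]^{<ω} → 2 there is H ∈ [κ]^κ with c constant on [H]^n for every n ∈ ω. Then every set in Σ([κ]^{<ω}, [κ]^{<κ}) is Ramsey. -/
open Set Cardinal

universe u

/-!
Let `S` be the union of the patterns `[A;B]`, `(A, B) ∈ Q`. Colour a finite set `a` by whether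
it is the `A`-side of a pattern in `Q`, and a finite set `b` by whether `max b` lies in the
`B`-side chosen for `b \ {max b}`; by the Ramsey property, applied once more inside a
homogeneous set for the second colouring, some `H ∈ [κ]^κ` is homogeneous for both.
If no `A`-side lies inside `H`, then `[H]^κ` misses `S`. Otherwise all `n`-subsets `a` of `H`
are `A`-sides, with chosen partners `B_a`. If top elements always lay in the chosen `B`, then
`H \ a ⊆ B_a` for the first `n` elements `a` of `H`, which is impossible as `|B_a| < κ`.
So they never do, and every `X ∈ [H]^κ` matches `(a, B_a)` for its first `n` elements `a`.
-/

section Homogeneous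

variable {α β : Type u} {γ : Type*}

def IsHomogeneous (c : Set α → γ) (H : Set α) : Prop :=
  ∀ n : ℕ, ∀ A₁ ⊆ H, ∀ A₂ ⊆ H, #A₁ = n → #A₂ = n → c A₁ = c A₂

lemma IsHomogeneous.mono {c : Set α → γ} {H H' : Set α} (h : IsHomogeneous c H')
    (hH : H ⊆ H') : IsHomogeneous c H :=
  fun n A₁ h₁ A₂ h₂ => h n A₁ (h₁.trans hH) A₂ (h₂.trans hH)

lemma IsHomogeneous.image {c : Set β → γ} {e : α → β} {H : Set α} (he : InjOn e H)
    (h : IsHomogeneous (fun A => c (e '' A)) H) : IsHomogeneous c (e '' H) := by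
  have hpull : ∀ A ⊆ e '' H, e '' (H ∩ e ⁻¹' A) = A := fun A hA => by
    rw [image_inter_preimage, inter_eq_right.mpr hA]
  have hcard : ∀ A ⊆ e '' H, #(H ∩ e ⁻¹' A : Set α) = #A := fun A hA => by
    conv_rhs => rw [← hpull A hA]
    exact (mk_image_eq_of_injOn e _ (he.mono inter_subset_left)).symm
  intro n A₁ h₁ A₂ h₂ hc₁ hc₂
  have := h n _ inter_subset_left _ inter_subset_left
    ((hcard A₁ h₁).trans hc₁) ((hcard A₂ h₂).trans hc₂)
  simpa only [hpull A₁ h₁, hpull A₂ h₂] using this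

end Homogeneous

lemma isHomogeneous_of_forall_nSets {κ : Cardinal.{0}} {c : Set Ordinal.{0} → Fin 2}
    {H : Set Ordinal.{0}} (hH : H ⊆ Iio κ.ord)
    (h : ∀ n : ℕ, ∀ A₁ ∈ nSets κ n, ∀ A₂ ∈ nSets κ n, A₁ ⊆ H → A₂ ⊆ H → c A₁ = c A₂) :
    IsHomogeneous c H :=
  fun n A₁ h₁ A₂ h₂ hc₁ hc₂ => h n A₁ ⟨h₁.trans hH, hc₁⟩ A₂ ⟨h₂.trans hH, hc₂⟩ h₁ h₂

/-- A bijection between `κ` and `H'` transports homogeneous sets into `H'`. -/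
lemma exists_isHomogeneous_subset {κ : Cardinal.{0}}
    (hram : ∀ c : Set Ordinal.{0} → Fin 2, ∃ H ∈ bigSets κ, IsHomogeneous c H)
    (c : Set Ordinal.{0} → Fin 2) {H' : Set Ordinal.{0}} (hH' : H' ∈ bigSets κ) :
    ∃ H ⊆ H', H ∈ bigSets κ ∧ IsHomogeneous c H := by
  have hIio : #(Iio κ.ord) = #H' := by
    rw [Cardinal.mk_Iio_ordinal, card_ord, hH'.2]
  obtain ⟨g⟩ := Cardinal.eq.mp hIio
  let e : Ordinal.{0} → Ordinal.{0} := fun o => if h : o ∈ Iio κ.ord then g ⟨o, h⟩ else 0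
  have he : InjOn e (Iio κ.ord) := fun x hx y hy hxy => by
    simp only [e, dif_pos hx, dif_pos hy] at hxy
    exact congrArg Subtype.val (g.injective (Subtype.ext hxy))
  have heH' : MapsTo e (Iio κ.ord) H' := fun o ho => by
    simp only [e, dif_pos ho]
    exact (g ⟨o, ho⟩).2
  obtain ⟨H₁, ⟨hH₁, hH₁card⟩, hom⟩ := hram fun A => c (e '' A)
  have hsub : e '' H₁ ⊆ H' := (heH'.mono_left hH₁).image_subset
  refine ⟨e '' H₁, hsub, ⟨hsub.trans hH'.1, ?_⟩, hom.image (he.mono hH₁)⟩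
  rw [mk_image_eq_of_injOn e H₁ (he.mono hH₁), hH₁card]

lemma Set.Infinite.exists_lower_subset_mk_eq {α : Type u} [LinearOrder α] [WellFoundedLT α]
    {X : Set α} (hX : X.Infinite) (n : ℕ) :
    ∃ a ⊆ X, a.Finite ∧ #a = n ∧ ∀ x ∈ X \ a, ∀ y ∈ a, y < x := by
  induction n with
  | zero => exact ⟨∅, empty_subset _, finite_empty, by simp, by simp⟩
  | succ n ih =>
    obtain ⟨a, haX, hafin, hacard, hlt⟩ := ih
    obtain ⟨m, ⟨hmX, hma⟩, hmin⟩ := wellFounded_lt.has_min (X \ a) (hX.sdiff hafin).nonempty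
    refine ⟨insert m a, insert_subset hmX haX, hafin.insert m, ?_, ?_⟩
    · rw [mk_insert hma, hacard, Nat.cast_succ]
    · rintro x ⟨hxX, hx⟩ y hy
      rw [mem_insert_iff, not_or] at hx
      rcases hy with rfl | hy
      · exact lt_of_le_of_ne (not_lt.mp (hmin x ⟨hxX, hx.2⟩)) (Ne.symm hx.1)
      · exact hlt x ⟨hxX, hx.2⟩ y hy

lemma mk_lt_of_subset_union_of_finite {α : Type u} {c : Cardinal.{u}} (hc : ℵ₀ ≤ c)
    {s t u : Set α} (hs : s ⊆ t ∪ u) (ht : t.Finite) (hu : #u < c) : #s < c :=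
  (mk_le_mk_of_subset hs).trans_lt <| (mk_union_le t u).trans_lt <|
    add_lt_of_lt hc (ht.lt_aleph0.trans_le hc) hu

section Colorings

variable {α : Type*} (Q : Set (Set α × Set α))

open Classical in
noncomputable def chosenB (a : Set α) : Set α :=
  if h : ∃ p ∈ Q, p.1 = a then h.choose.2 else ∅

open Classical in
noncomputable def headColoring (a : Set α) : Fin 2 :=
  if ∃ p ∈ Q, p.1 = a then 1 else 0

open Classical in
noncomputable def topColoring [SupSet α] (b : Set α) : Fin 2 :=
  if sSup b ∈ chosenB Q (b \ {sSup b}) then 1 else 0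

variable {Q}

lemma pair_chosenB_mem {a : Set α} (h : ∃ p ∈ Q, p.1 = a) : (a, chosenB Q a) ∈ Q := by
  rw [chosenB, dif_pos h]
  obtain ⟨hmem, hfst⟩ := h.choose_spec
  exact (Prod.ext hfst rfl : h.choose = (a, h.choose.2)) ▸ hmem

lemma headColoring_eq_one_iff {a : Set α} : headColoring Q a = 1 ↔ ∃ p ∈ Q, p.1 = a := by
  unfold headColoring; split_ifs with h <;> simp [h]

lemma topColoring_insert_eq_one_iff [ConditionallyCompleteLinearOrder α] {a : Set α} {z : α}
    (hz : ∀ y ∈ a, y < z) :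
    topColoring Q (insert z a) = 1 ↔ z ∈ chosenB Q a := by
  have htop : sSup (insert z a) = z :=
    IsGreatest.csSup_eq ⟨mem_insert z a, forall_mem_insert.mpr ⟨le_rfl, fun y hy => (hz y hy).le⟩⟩
  have hrest : insert z a \ {z} = a := insert_sdiff_self_of_notMem fun h => lt_irrefl z (hz z h)
  unfold topColoring; rw [htop, hrest]; split_ifs with h <;> simp [h]

end Colorings

section Sigma

variable {κ : Cardinal.{0}} {Q : Set (Set Ordinal.{0} × Set Ordinal.{0})} {H : Set Ordinal.{0}}

lemma infinite_of_mk_eq_lift (hκ : ℵ₀ ≤ κ) {X : Set Ordinal.{0}} (hX : #X = lift.{1} κ) :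
    X.Infinite :=
  infinite_coe_iff.mp <| Cardinal.infinite_iff.mpr <| hX ▸ aleph0_le_lift.mpr hκ

lemma subBig_inter_eq_empty (h : ∀ p ∈ Q, ¬ p.1 ⊆ H) :
    subBig κ H ∩ {X ∈ bigSets κ | ∃ p ∈ Q, Matches X p.1 p.2} = ∅ :=
  eq_empty_iff_forall_notMem.mpr fun _ ⟨hXH, _, p, hp, hA, _⟩ => h p hp (hA.trans hXH.1)

lemma IsHomogeneous.pair_chosenB_mem (hom : IsHomogeneous (headColoring Q) H)
    {p : Set Ordinal.{0} × Set Ordinal.{0}} (hp : p ∈ Q) (hpH : p.1 ⊆ H) {n : ℕ}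
    (hn : #p.1 = n) {a : Set Ordinal.{0}} (haH : a ⊆ H) (ha : #a = n) :
    (a, chosenB Q a) ∈ Q := by
  refine _root_.pair_chosenB_mem (headColoring_eq_one_iff.mp ?_)
  rw [hom n a haH p.1 hpH ha hn, headColoring_eq_one_iff]
  exact ⟨p, hp, rfl⟩

lemma isRamsey_of_isHomogeneous (hκ : ℵ₀ ≤ κ)
    (hQ : ∀ p ∈ Q, p.1 ∈ finSets κ ∧ p.2 ∈ smallSets κ κ ∧ Disjoint p.1 p.2)
    (hH : H ∈ bigSets κ) (homHead : IsHomogeneous (headColoring Q) H)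
    (homTop : IsHomogeneous (topColoring Q) H) :
    IsRamsey κ {X ∈ bigSets κ | ∃ p ∈ Q, Matches X p.1 p.2} := by
  by_cases hhead : ∃ p ∈ Q, p.1 ⊆ H
  swap
  · push Not at hhead
    exact ⟨H, hH, Or.inr (subBig_inter_eq_empty hhead)⟩
  obtain ⟨p₀, hp₀, hp₀H⟩ := hhead
  obtain ⟨n, hn⟩ := lt_aleph0.mp (hQ p₀ hp₀).1.2.lt_aleph0
  have hpair {a} (haH : a ⊆ H) (ha : #a = n) : (a, chosenB Q a) ∈ Q :=
    homHead.pair_chosenB_mem hp₀ hp₀H hn haH ha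
  have hHinf := infinite_of_mk_eq_lift hκ hH.2
  obtain ⟨b₀, hb₀H, -, hb₀, -⟩ := hHinf.exists_lower_subset_mk_eq (n + 1)
  have hB {a} (haH : a ⊆ H) (ha : #a = n) {z} (hz : z ∈ H) (hza : ∀ y ∈ a, y < z) :
      z ∈ chosenB Q a ↔ topColoring Q b₀ = 1 := by
    have hcard : #(insert z a : Set Ordinal.{0}) = ↑(n + 1) := by
      rw [mk_insert fun h => lt_irrefl z (hza z h), ha, Nat.cast_succ]
    rw [← topColoring_insert_eq_one_iff hza, homTop _ _ (insert_subset hz haH) b₀ hb₀H hcard hb₀]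
  by_cases hv : topColoring Q b₀ = 1
  · obtain ⟨a, haH, hafin, ha, hlt⟩ := hHinf.exists_lower_subset_mk_eq n
    have hHa : H ⊆ a ∪ chosenB Q a := fun z hz =>
      or_iff_not_imp_left.mpr fun hza => (hB haH ha hz (hlt z ⟨hz, hza⟩)).mpr hv
    exact absurd hH.2 (mk_lt_of_subset_union_of_finite (aleph0_le_lift.mpr hκ) hHa hafin
      (hQ _ (hpair haH ha)).2.1.2).ne
  · refine ⟨H, hH, Or.inl fun X ⟨hXH, hX⟩ => ⟨⟨hXH.trans hH.1, hX⟩, ?_⟩⟩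
    obtain ⟨a, haX, -, ha, hlt⟩ := (infinite_of_mk_eq_lift hκ hX).exists_lower_subset_mk_eq n
    have hpairX := hpair (haX.trans hXH) ha
    refine ⟨_, hpairX, haX, eq_empty_iff_forall_notMem.mpr ?_⟩
    rintro z ⟨hzB, hzX⟩
    by_cases hza : z ∈ a
    · exact disjoint_left.mp (hQ _ hpairX).2.2 hza hzB
    · exact hv ((hB (haX.trans hXH) ha (hXH hzX) (hlt z ⟨hzX, hza⟩)).mp hzB)

end Sigma

/-- Let `κ` be a Ramsey cardinal: an uncountable cardinal such
that every `c : [κ]^{<ω} → 2` admits `H ∈ [κ]^κ` with `c` constant on `[H]^n`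
for every `n ∈ ω`.  Then every set in `Σ([κ]^{<ω}, [κ]^{<κ})` is Ramsey. -/
theorem statement10 (κ : Cardinal.{0}) (hκ : ℵ₀ < κ)
    (hram : ∀ c : Set Ordinal.{0} → Fin 2,
      ∃ H ∈ bigSets κ, ∀ n : ℕ,
        ∀ A₁ ∈ nSets κ n, ∀ A₂ ∈ nSets κ n, A₁ ⊆ H → A₂ ⊆ H → c A₁ = c A₂) :
    ∀ S ∈ SigmaFam κ (finSets κ) (smallSets κ κ), IsRamsey κ S := by
  rintro S ⟨Q, hQ, rfl⟩
  have hram' (c : Set Ordinal.{0} → Fin 2) : ∃ H ∈ bigSets κ, IsHomogeneous c H :=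
    let ⟨H, hH, hom⟩ := hram c
    ⟨H, hH, isHomogeneous_of_forall_nSets hH.1 hom⟩
  obtain ⟨H₂, hH₂, homTop⟩ := hram' (topColoring Q)
  obtain ⟨H, hHH₂, hH, homHead⟩ := exists_isHomogeneous_subset hram' (headColoring Q) hH₂
  exact isRamsey_of_isHomogeneous hκ.le hQ hH homHead (homTop.mono hHH₂)
end

section
/- Let κ be an uncountable cardinal such that for every cardinal μ < κ and every coloring d : [κ]^{<ω} → μ there is H ∈ [κ]^κ with d constant on [H]^n for every n ∈ ω (this holds when κ is a Ramsey cardinal). Let 1 ≤ λ < κ be a cardinal and let c : [κ]^κ → λ+1 be a function such that for each α < λ, the preimage c⁻¹(α) is in Σ([κ]^{<ω}, [κ]^{<κ}) (no requirement is placed on c⁻¹(λ)). Then c is Ramsey, i.e., there is H ∈ [κ]^κ such that c is constant on [H]^κ. -/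
open Set Cardinal

/-!
Colouring pairs by whether they lie in the same block of a partition of `κ` into fewer than `κ`
bounded pieces shows that the partition property forces `κ` to be regular.

Colour each finite `A` by the least level `α < λ` at which `A` is the first coordinate of a pattern
witnessing `c⁻¹(α) ∈ Σ`, and let `H₀` be homogeneous. If no finite subset of `H₀` heads a pattern,
no `X ∈ [H₀]^κ` can have colour `α < λ`, so `c ≡ λ` there. Otherwise every `n`-subset `A` of `H₀`
heads a pattern `(A, F A)` of one fixed level `α`. Since `|F A| < κ` and `κ` is regular, a
recursion of length `κ` thins `H₀` to `H ∈ [κ]^κ` in which no element lies in `F A` for an `n`-set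
`A` below it. Every `X ∈ [H]^κ` then matches `(A, F A)` for `A` its first `n` elements, so
`c ≡ α` on `[H]^κ`.
-/

section Cardinality

variable {κ : Cardinal.{0}}

theorem mk_Iic_lt_lift_of_lt_ord (hκ : ℵ₀ ≤ κ) {p : Ordinal.{0}} (hp : p < κ.ord) :
    #(Iic p) < Cardinal.lift.{1} κ := by
  rw [← Order.Iio_succ, Cardinal.mk_Iio_ordinal, Cardinal.lift_lt, ← Cardinal.lt_ord]
  exact (Cardinal.isSuccLimit_ord hκ).succ_lt hp

theorem mk_subsets_of_mk_le_nat_le {α : Type*} (P : Set α) (n : ℕ) :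
    #{A : Set α // A ⊆ P ∧ #A ≤ n} ≤ max #P ℵ₀ :=
  (Cardinal.mk_bounded_subset_le P n).trans (Cardinal.power_nat_le (le_max_right _ _))

theorem exists_cofinal_subset_mk_lt_of_not_isRegular (hκ : ℵ₀ ≤ κ) (hreg : ¬ κ.IsRegular) :
    ∃ S ⊆ Iio κ.ord, (∀ x < κ.ord, ∃ y ∈ S, x ≤ y) ∧ #S < Cardinal.lift.{1} κ := by
  have hcof : κ.ord.cof < κ := lt_of_not_ge fun h => hreg ⟨hκ, h⟩
  obtain ⟨s, hs, hsmk⟩ := Order.exists_cof_eq (α := Iio κ.ord)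
  refine ⟨Subtype.val '' s, by simp, fun x hx => ?_, ?_⟩
  · obtain ⟨y, hy, hxy⟩ := hs ⟨x, hx⟩
    exact ⟨y, mem_image_of_mem _ hy, hxy⟩
  · rw [Cardinal.mk_image_eq Subtype.val_injective, hsmk, Ordinal.cof_Iio, ← Ordinal.lift_cof]
    exact Cardinal.lift_lt.2 hcof

end Cardinality

theorem exists_initialSegment_mk_eq {α : Type*} [LinearOrder α] [WellFoundedLT α] (n : ℕ)
    {X : Set α} (hX : X.Infinite) :
    ∃ A ⊆ X, #A = n ∧ ∀ x ∈ X \ A, ∀ a ∈ A, a < x := by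
  induction n with
  | zero => exact ⟨∅, empty_subset _, by simp, by simp⟩
  | succ n ih =>
    obtain ⟨A, hAX, hAn, hAlt⟩ := ih
    have hne : (X \ A).Nonempty :=
      (hX.sdiff (Cardinal.lt_aleph0_iff_set_finite.1 (hAn ▸ Cardinal.natCast_lt_aleph0))).nonempty
    set m := wellFounded_lt.min (X \ A) hne
    have hm : m ∈ X \ A := wellFounded_lt.min_mem (X \ A) hne
    refine ⟨insert m A, insert_subset hm.1 hAX, by rw [Cardinal.mk_insert hm.2, hAn]; norm_cast, ?_⟩
    rintro x ⟨hxX, hxmA⟩ a ha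
    rw [mem_insert_iff, not_or] at hxmA
    rcases mem_insert_iff.1 ha with rfl | haA
    · exact lt_of_le_of_ne (not_lt.1 (wellFounded_lt.not_lt_min (X \ A) ⟨hxX, hxmA.2⟩))
        (Ne.symm hxmA.1)
    · exact hAlt x ⟨hxX, hxmA.2⟩ a haA

theorem eqOn_or_injOn_of_pairs {α β : Type*} {g : α → β} {H : Set α}
    (h : ∀ x ∈ H, ∀ y ∈ H, ∀ u ∈ H, ∀ v ∈ H, x ≠ y → u ≠ v → g x = g y → g u = g v) :
    (∀ x ∈ H, ∀ y ∈ H, g x = g y) ∨ InjOn g H := by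
  by_cases hcoll : ∃ x ∈ H, ∃ y ∈ H, x ≠ y ∧ g x = g y
  · obtain ⟨x, hx, y, hy, hxy, hg⟩ := hcoll
    left
    intro u hu v hv
    by_cases huv : u = v
    · rw [huv]
    · exact h x hx y hy u hu v hv hxy huv hg
  · push Not at hcoll
    exact Or.inr fun x hx y hy hg => by_contra fun hxy => hcoll x hx y hy hxy hg

/-- The partition property `κ → (κ)^{<ω}_μ` for all `μ < κ`. -/
def HasFinitaryPartitionProperty (κ : Cardinal.{0}) : Prop :=
  ∀ μ : Cardinal.{0}, μ < κ →
    ∀ d : Set Ordinal.{0} → Ordinal.{0},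
      (∀ A ∈ finSets κ, d A < μ.ord) →
      ∃ H ∈ bigSets κ, ∀ n : ℕ,
        ∀ A₁ ∈ nSets κ n, ∀ A₂ ∈ nSets κ n, A₁ ⊆ H → A₂ ⊆ H → d A₁ = d A₂

theorem pair_mem_nSets {κ : Cardinal.{0}} {x y : Ordinal.{0}} (hx : x < κ.ord) (hy : y < κ.ord)
    (hxy : x ≠ y) : {x, y} ∈ nSets κ 2 := by
  refine ⟨insert_subset hx (singleton_subset_iff.2 hy), ?_⟩
  rw [Cardinal.mk_insert (by simpa using hxy), Cardinal.mk_singleton]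
  norm_num

theorem HasFinitaryPartitionProperty.isRegular {κ : Cardinal.{0}} (hκ : ℵ₀ ≤ κ)
    (hram : HasFinitaryPartitionProperty κ) : κ.IsRegular := by
  classical
  by_contra hreg
  obtain ⟨S, hSκ, hS, hSmk⟩ := exists_cofinal_subset_mk_lt_of_not_isRegular hκ hreg
  -- `g` sends `x` to the first point of `S` above it: its fibres are bounded and its range small.
  set g : Ordinal.{0} → Ordinal.{0} := fun x => sInf (S ∩ Ici x)
  have hg : ∀ x < κ.ord, g x ∈ S ∧ x ≤ g x := fun x hx =>
    csInf_mem (s := S ∩ Ici x) (by obtain ⟨y, hy, hxy⟩ := hS x hx; exact ⟨y, hy, hxy⟩)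
  let d : Set Ordinal.{0} → Ordinal.{0} := fun A => if InjOn g A then 1 else 0
  obtain ⟨H, hH, hhom⟩ := hram 2 ((Cardinal.natCast_lt_aleph0 (n := 2)).trans_le hκ) d
    fun A _ => by
      rw [Cardinal.ord_ofNat]
      by_cases h : InjOn g A <;> simp [d, h]
  have hHκ : ∀ x ∈ H, x < κ.ord := fun x hx => hH.1 hx
  have hpairs : ∀ x ∈ H, ∀ y ∈ H, ∀ u ∈ H, ∀ v ∈ H, x ≠ y → u ≠ v → g x = g y → g u = g v := by
    intro x hx y hy u hu v hv hxy huv hg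
    have := hhom 2 _ (pair_mem_nSets (hHκ x hx) (hHκ y hy) hxy) _
      (pair_mem_nSets (hHκ u hu) (hHκ v hv) huv) (insert_subset hx (singleton_subset_iff.2 hy))
      (insert_subset hu (singleton_subset_iff.2 hv))
    by_contra hguv
    simp [d, hg, hxy, hguv] at this
  rcases eqOn_or_injOn_of_pairs hpairs with hconst | hinj
  · obtain ⟨a, ha⟩ : H.Nonempty := by
      rw [← Set.nonempty_coe_sort, ← Cardinal.mk_ne_zero_iff, hH.2]
      exact (Cardinal.aleph0_pos.trans_le (Cardinal.aleph0_le_lift.2 hκ)).ne'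
    have hsub : H ⊆ Iic (g a) := fun x hx => (hg x (hHκ x hx)).2.trans (hconst x hx a ha).le
    exact ((Cardinal.mk_le_mk_of_subset hsub).trans_lt
      (mk_Iic_lt_lift_of_lt_ord hκ (hSκ (hg a (hHκ a ha)).1))).ne hH.2
  · have : #H ≤ #S := by
      rw [← Cardinal.mk_image_eq_of_injOn g H hinj]
      exact Cardinal.mk_le_mk_of_subset (by rintro - ⟨x, hx, rfl⟩; exact (hg x (hHκ x hx)).1)
    exact (this.trans_lt hSmk).ne hH.2

section FreeSubset

variable {κ : Cardinal.{0}}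

theorem exists_transfinite_seq_mem {S : Set Ordinal.{0}} (good : Set Ordinal.{0} → Set Ordinal.{0})
    (hgood : ∀ P ⊆ S, #P < Cardinal.lift.{1} κ → (S ∩ good P).Nonempty) :
    ∃ f : Ordinal.{0} → Ordinal.{0}, ∀ ξ < κ.ord, f ξ ∈ S ∩ good (f '' Iio ξ) := by
  obtain ⟨f, hf⟩ : ∃ f : Ordinal.{0} → Ordinal.{0},
      ∀ ξ, f ξ = Classical.epsilon (· ∈ S ∩ good (f '' Iio ξ)) :=
    ⟨wellFounded_lt.fix fun ξ ih =>
        Classical.epsilon (· ∈ S ∩ good {x | ∃ η, ∃ hη : η < ξ, ih η hη = x}),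
      fun ξ => by
        rw [WellFounded.fix_eq]
        congr! 5
        simp only [exists_prop]
        rfl⟩
  refine ⟨f, fun ξ => ?_⟩
  induction ξ using WellFoundedLT.induction with
  | _ ξ IH =>
    intro hξ
    rw [hf ξ]
    refine Classical.epsilon_spec (hgood _ ?_ ?_)
    · rintro - ⟨η, hη, rfl⟩
      exact (IH η hη (lt_trans hη hξ)).1
    · calc #(f '' Iio ξ) ≤ #(Iio ξ) := Cardinal.mk_image_le
        _ = Cardinal.lift.{1} ξ.card := Cardinal.mk_Iio_ordinal ξ
        _ < Cardinal.lift.{1} κ := Cardinal.lift_lt.2 (Cardinal.lt_ord.1 hξ)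

variable (hκ : ℵ₀ < κ) (hreg : κ.IsRegular) {H₀ : Set Ordinal.{0}} (hH₀ : H₀ ∈ bigSets κ)
  (n : ℕ) (F : Set Ordinal.{0} → Set Ordinal.{0}) (hF : ∀ A, #(F A) < Cardinal.lift.{1} κ)
include hκ hreg hH₀ hF

theorem exists_mem_gt_notMem_of_mk_lt {P : Set Ordinal.{0}} (hP : P ⊆ Iio κ.ord)
    (hPmk : #P < Cardinal.lift.{1} κ) :
    ∃ β ∈ H₀, (∀ p ∈ P, p < β) ∧ ∀ A ⊆ P, #A ≤ n → β ∉ F A := by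
  have hlreg := hreg.lift.{1}
  have hℵ₀ : ℵ₀ < Cardinal.lift.{1} κ := by simpa using hκ
  set small := {A : Set Ordinal.{0} // A ⊆ P ∧ #A ≤ n}
  have hbelow : #(⋃ p : P, Iic (p : Ordinal.{0})) < Cardinal.lift.{1} κ :=
    (Cardinal.card_iUnion_lt_iff_forall_of_isRegular hlreg hPmk).2
      fun p => mk_Iic_lt_lift_of_lt_ord hκ.le (hP p.2)
  have hsmall : #(⋃ A : small, F A.1) < Cardinal.lift.{1} κ :=
    (Cardinal.card_iUnion_lt_iff_forall_of_isRegular hlreg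
      ((mk_subsets_of_mk_le_nat_le P n).trans_lt (max_lt hPmk hℵ₀))).2 fun A => hF A.1
  obtain ⟨β, hβ, hβbad⟩ := Cardinal.sdiff_nonempty_of_mk_lt_mk
    (S := (⋃ p : P, Iic (p : Ordinal.{0})) ∪ ⋃ A : small, F A.1) (T := H₀)
    (hH₀.2 ▸ (Cardinal.mk_union_le _ _).trans_lt (Cardinal.add_lt_of_lt hℵ₀.le hbelow hsmall))
  refine ⟨β, hβ, fun p hp => ?_, fun A hAP hAn hβA => ?_⟩
  · exact lt_of_not_ge fun h => hβbad (Or.inl (mem_iUnion.2 ⟨⟨p, hp⟩, h⟩))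
  · exact hβbad (Or.inr (mem_iUnion.2 ⟨⟨A, hAP, hAn⟩, hβA⟩))

theorem exists_subset_free_above :
    ∃ H ∈ bigSets κ, H ⊆ H₀ ∧ ∀ A ⊆ H, #A ≤ n → ∀ x ∈ H, (∀ a ∈ A, a < x) → x ∉ F A := by
  obtain ⟨f, hf⟩ := exists_transfinite_seq_mem (κ := κ) (S := H₀)
    (fun P => {β | (∀ p ∈ P, p < β) ∧ ∀ A ⊆ P, #A ≤ n → β ∉ F A})
    fun P hP hPmk => exists_mem_gt_notMem_of_mk_lt hκ hreg hH₀ n F hF (hP.trans hH₀.1) hPmk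
  have hmono : StrictMonoOn f (Iio κ.ord) := fun η _ ξ hξ hlt => (hf ξ hξ).2.1 _ ⟨η, hlt, rfl⟩
  refine ⟨f '' Iio κ.ord, ⟨?_, ?_⟩, ?_, ?_⟩
  · rintro - ⟨ξ, hξ, rfl⟩
    exact hH₀.1 (hf ξ hξ).1
  · rw [Cardinal.mk_image_eq_of_injOn _ _ hmono.injOn, Cardinal.mk_Iio_ordinal, Cardinal.card_ord]
  · rintro - ⟨ξ, hξ, rfl⟩
    exact (hf ξ hξ).1
  · rintro A hA hAn - ⟨ξ, hξ, rfl⟩ hAx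
    refine (hf ξ hξ).2.2 A (fun a ha => ?_) hAn
    obtain ⟨η, hη, rfl⟩ := hA ha
    exact ⟨η, (hmono.lt_iff_lt hη hξ).1 (hAx _ ha), rfl⟩

end FreeSubset

section Patterns

variable {κ : Cardinal.{0}} {c : Set Ordinal.{0} → Ordinal.{0}} {o α : Ordinal.{0}}
  {Q : Ordinal.{0} → Set (Set Ordinal.{0} × Set Ordinal.{0})}

/-- `Q α` is a family of patterns witnessing `c⁻¹(α) ∈ Σ([κ]^{<ω}, [κ]^{<κ})`, for each `α < o`. -/
def IsPatternCode (κ : Cardinal.{0}) (c : Set Ordinal.{0} → Ordinal.{0}) (o : Ordinal.{0})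
    (Q : Ordinal.{0} → Set (Set Ordinal.{0} × Set Ordinal.{0})) : Prop :=
  ∀ α < o, (∀ p ∈ Q α, p.1 ∈ finSets κ ∧ p.2 ∈ smallSets κ κ ∧ Disjoint p.1 p.2) ∧
    {X ∈ bigSets κ | c X = α} = {X ∈ bigSets κ | ∃ p ∈ Q α, Matches X p.1 p.2}

theorem exists_isPatternCode
    (h : ∀ α < o, {X ∈ bigSets κ | c X = α} ∈ SigmaFam κ (finSets κ) (smallSets κ κ)) :
    ∃ Q, IsPatternCode κ c o Q := by
  choose! Q hQ using h
  exact ⟨Q, hQ⟩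

def headLevels (Q : Ordinal.{0} → Set (Set Ordinal.{0} × Set Ordinal.{0})) (o : Ordinal.{0})
    (A : Set Ordinal.{0}) : Set Ordinal.{0} :=
  {α | α < o ∧ ∃ B, (A, B) ∈ Q α}

open Classical in
/-- The shift by one frees the colour `0` for the sets that head no pattern. -/
noncomputable def headColor (Q : Ordinal.{0} → Set (Set Ordinal.{0} × Set Ordinal.{0}))
    (o : Ordinal.{0}) (A : Set Ordinal.{0}) : Ordinal.{0} :=
  if (headLevels Q o A).Nonempty then Order.succ (sInf (headLevels Q o A)) else 0

theorem headColor_lt_ord {μ : Cardinal.{0}} (hμ : ℵ₀ ≤ μ) (ho : o ≤ μ.ord) (A : Set Ordinal.{0}) :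
    headColor Q o A < μ.ord := by
  have hlim := Cardinal.isSuccLimit_ord hμ
  unfold headColor
  split_ifs with h
  · exact hlim.succ_lt ((csInf_mem h).1.trans_le ho)
  · exact hlim.bot_lt

theorem headColor_ne_zero (hα : α < o) {A B : Set Ordinal.{0}} (hAB : (A, B) ∈ Q α) :
    headColor Q o A ≠ 0 := by
  rw [headColor, if_pos ⟨α, hα, B, hAB⟩]
  exact Order.succ_ne_bot _

theorem sInf_headLevels_mem_of_headColor_eq {A A' : Set Ordinal.{0}}
    (h : headColor Q o A = headColor Q o A') (h' : headColor Q o A' ≠ 0) :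
    sInf (headLevels Q o A') ∈ headLevels Q o A := by
  have hA' : (headLevels Q o A').Nonempty := by
    by_contra hne
    exact h' (if_neg hne)
  have hA : (headLevels Q o A).Nonempty := by
    by_contra hne
    exact h' (h ▸ if_neg hne)
  rw [headColor, headColor, if_pos hA, if_pos hA', Order.succ_eq_succ_iff] at h
  exact h ▸ csInf_mem hA

namespace IsPatternCode

variable (hQ : IsPatternCode κ c o Q)
include hQ

theorem apply_eq_iff (hα : α < o) {X : Set Ordinal.{0}} (hX : X ∈ bigSets κ) :
    c X = α ↔ ∃ p ∈ Q α, Matches X p.1 p.2 := by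
  simpa [hX] using Set.ext_iff.1 (hQ α hα).2 X

theorem exists_tail (hα : α < o) (hκ : κ ≠ 0) :
    ∃ F : Set Ordinal.{0} → Set Ordinal.{0}, (∀ A, #(F A) < Cardinal.lift.{1} κ) ∧
      ∀ A, (∃ B, (A, B) ∈ Q α) → (A, F A) ∈ Q α := by
  classical
  refine ⟨fun A => if h : ∃ B, (A, B) ∈ Q α then h.choose else ∅, fun A => ?_, fun A h => ?_⟩
  · dsimp only
    split_ifs with h
    · exact ((hQ α hα).1 _ h.choose_spec).2.1.2
    · simpa [pos_iff_ne_zero] using hκ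
  · simpa [dif_pos h] using h.choose_spec

theorem apply_eq_of_headColor_eq_zero (hc : ∀ X ∈ bigSets κ, c X ≤ o) {H₀ : Set Ordinal.{0}}
    (h0 : ∀ A ∈ finSets κ, A ⊆ H₀ → headColor Q o A = 0) {X : Set Ordinal.{0}}
    (hX : X ∈ bigSets κ) (hXH₀ : X ⊆ H₀) : c X = o := by
  refine (hc X hX).eq_of_not_lt fun hlt => ?_
  obtain ⟨p, hp, hXp⟩ := (hQ.apply_eq_iff hlt hX).1 rfl
  exact headColor_ne_zero hlt hp (h0 p.1 ((hQ _ hlt).1 p hp).1 (hXp.1.trans hXH₀))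

theorem apply_eq_of_free (hα : α < o) (hκ : ℵ₀ ≤ κ) {n : ℕ}
    {F : Set Ordinal.{0} → Set Ordinal.{0}} {H : Set Ordinal.{0}}
    (hpat : ∀ A ⊆ H, #A = n → (A, F A) ∈ Q α)
    (hfree : ∀ A ⊆ H, #A ≤ n → ∀ x ∈ H, (∀ a ∈ A, a < x) → x ∉ F A) {X : Set Ordinal.{0}}
    (hX : X ∈ bigSets κ) (hXH : X ⊆ H) : c X = α := by
  have hXinf : X.Infinite :=
    Set.infinite_coe_iff.1 (Cardinal.infinite_iff.2 (hX.2 ▸ Cardinal.aleph0_le_lift.2 hκ))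
  obtain ⟨A, hAX, hAn, hAlow⟩ := exists_initialSegment_mk_eq n hXinf
  have hp := hpat A (hAX.trans hXH) hAn
  refine (hQ.apply_eq_iff hα hX).2 ⟨_, hp, hAX, eq_empty_iff_forall_notMem.2 ?_⟩
  rintro x ⟨hxF, hxX⟩
  by_cases hxA : x ∈ A
  · exact disjoint_left.1 ((hQ α hα).1 _ hp).2.2 hxA hxF
  · exact hfree A (hAX.trans hXH) hAn.le x (hXH hxX) (hAlow x ⟨hxX, hxA⟩) hxF

end IsPatternCode

end Patterns

theorem statement11_general (κ : Cardinal.{0}) (hκ : ℵ₀ < κ)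
    (hram : ∀ μ : Cardinal.{0}, μ < κ →
      ∀ d : Set Ordinal.{0} → Ordinal.{0},
        (∀ A ∈ finSets κ, d A < μ.ord) →
        ∃ H ∈ bigSets κ, ∀ n : ℕ,
          ∀ A₁ ∈ nSets κ n, ∀ A₂ ∈ nSets κ n, A₁ ⊆ H → A₂ ⊆ H → d A₁ = d A₂)
    (lam : Cardinal.{0}) (hlamκ : lam < κ)
    (c : Set Ordinal.{0} → Ordinal.{0})
    (hc : ∀ X ∈ bigSets κ, c X ≤ lam.ord)
    (hpre : ∀ α < lam.ord,
      {X ∈ bigSets κ | c X = α} ∈ SigmaFam κ (finSets κ) (smallSets κ κ)) :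
    ∃ H ∈ bigSets κ, ∀ X ∈ subBig κ H, ∀ Y ∈ subBig κ H, c X = c Y := by
  have hreg : κ.IsRegular := HasFinitaryPartitionProperty.isRegular hκ.le hram
  obtain ⟨Q, hQ⟩ := exists_isPatternCode hpre
  obtain ⟨H₀, hH₀, hhom⟩ := hram (max lam ℵ₀) (max_lt hlamκ hκ) (headColor Q lam.ord)
    fun A _ => headColor_lt_ord (le_max_right _ _) (Cardinal.ord_le_ord.2 (le_max_left _ _)) A
  suffices ∃ H ∈ bigSets κ, ∃ α, ∀ X ∈ subBig κ H, c X = α by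
    obtain ⟨H, hH, α, hα⟩ := this
    exact ⟨H, hH, fun X hX Y hY => (hα X hX).trans (hα Y hY).symm⟩
  by_cases hhead : ∃ A ∈ finSets κ, A ⊆ H₀ ∧ headColor Q lam.ord A ≠ 0
  · obtain ⟨A₀, hA₀, hA₀H₀, hA₀c⟩ := hhead
    obtain ⟨n, hn⟩ := Cardinal.lt_aleph0.1 (Cardinal.lt_aleph0_iff_set_finite.2 hA₀.2)
    -- by homogeneity, all `n`-subsets of `H₀` head patterns of one common level `α`
    set α := sInf (headLevels Q lam.ord A₀)
    have hlev : ∀ A ⊆ H₀, #A = n → α ∈ headLevels Q lam.ord A := fun A hA hAn =>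
      sInf_headLevels_mem_of_headColor_eq
        (hhom n A ⟨hA.trans hH₀.1, hAn⟩ A₀ ⟨hA₀.1, hn⟩ hA hA₀H₀) hA₀c
    have hα : α < lam.ord := (hlev A₀ hA₀H₀ hn).1
    obtain ⟨F, hFκ, hF⟩ := hQ.exists_tail hα (Cardinal.aleph0_pos.trans hκ).ne'
    obtain ⟨H, hH, hHH₀, hfree⟩ := exists_subset_free_above hκ hreg hH₀ n F hFκ
    exact ⟨H, hH, α, fun X hX => hQ.apply_eq_of_free hα hκ.le
      (fun A hA hAn => hF A (hlev A (hA.trans hHH₀) hAn).2) hfree ⟨hX.1.trans hH.1, hX.2⟩ hX.1⟩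
  · push Not at hhead
    exact ⟨H₀, hH₀, lam.ord, fun X hX =>
      hQ.apply_eq_of_headColor_eq_zero hc hhead ⟨hX.1.trans hH₀.1, hX.2⟩ hX.1⟩

/-- Let `κ` be an uncountable cardinal such that every
coloring `d : [κ]^{<ω} → μ` with `μ < κ` colors admits `H ∈ [κ]^κ` with `d`
constant on `[H]^n` for every `n ∈ ω`.  Let `1 ≤ λ < κ` and `c : [κ]^κ → λ+1`
with `c⁻¹(α) ∈ Σ([κ]^{<ω}, [κ]^{<κ})` for each `α < λ` (nothing is assumed
about `c⁻¹(λ)`).  Then `c` is Ramsey. -/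
theorem statement11 (κ : Cardinal.{0}) (hκ : ℵ₀ < κ)
    (hram : ∀ μ : Cardinal.{0}, μ < κ →
      ∀ d : Set Ordinal.{0} → Ordinal.{0},
        (∀ A ∈ finSets κ, d A < μ.ord) →
        ∃ H ∈ bigSets κ, ∀ n : ℕ,
          ∀ A₁ ∈ nSets κ n, ∀ A₂ ∈ nSets κ n, A₁ ⊆ H → A₂ ⊆ H → d A₁ = d A₂)
    (lam : Cardinal.{0}) (hlam1 : 1 ≤ lam) (hlamκ : lam < κ)
    (c : Set Ordinal.{0} → Ordinal.{0})
    (hc : ∀ X ∈ bigSets κ, c X ≤ lam.ord)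
    (hpre : ∀ α < lam.ord,
      {X ∈ bigSets κ | c X = α} ∈ SigmaFam κ (finSets κ) (smallSets κ κ)) :
    ∃ H ∈ bigSets κ, ∀ X ∈ subBig κ H, ∀ Y ∈ subBig κ H, c X = c Y :=
  statement11_general κ hκ hram lam hlamκ c hc hpre
end
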